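/- For every p ∈ (0,1), the ratio of successive variations var_{n+1}/var_n converges to |a(p)| as n → ∞, where var_n := |g_p(n) - g_p(n+1)|, and consequently the series Σ_{n=2}^∞ |g_p(n) - g_p(n+1)| converges. -/

import Mathlib

open Real Set Filter Topology

noncomputable def lamR (p : ℝ) : ℝ := (1 - p - Real.sqrt ((1 - p) * (3 * p + 1))) / 2
noncomputable def lamPF (p : ℝ) : ℝ := (1 - p + Real.sqrt ((1 - p) * (3 * p + 1))) / 2
noncomputable def evRatio (p : ℝ) : ℝ := lamR p / lamPF p

noncomputable def gFun (p : ℝ) (n : ℕ) : ℝ :=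
  ((-1 : ℝ) ^ (n + 1) * |evRatio p| ^ n * (lamPF p / (1 - lamR p)) + lamPF p / (1 - lamPF p)) /
    ((-1 : ℝ) ^ n * |evRatio p| ^ (n - 1) * (1 / (1 - lamR p)) + 1 / (1 - lamPF p))

theorem gFun_variation_ratio_and_summable (p : ℝ) (hp : p ∈ Ioo (0 : ℝ) 1) :
    Tendsto
      (fun n : ℕ => |gFun p (n + 3) - gFun p (n + 4)| / |gFun p (n + 2) - gFun p (n + 3)|)
      atTop (nhds |evRatio p|) ∧
    Summable (fun n : ℕ => |gFun p (n + 2) - gFun p (n + 3)|) := by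
  obtain ⟨hp0, hp1⟩ := hp
  set s := Real.sqrt ((1 - p) * (3 * p + 1)) with hs_def
  have hprod : 0 < (1 - p) * (3 * p + 1) := by nlinarith
  have hs2 : s ^ 2 = (1 - p) * (3 * p + 1) := Real.sq_sqrt hprod.le
  have hspos : 0 < s := Real.sqrt_pos.mpr hprod
  have hs_lt : s < 1 + p := by nlinarith
  have hs_gt : 1 - p < s := by nlinarith
  have hrv : lamR p = (1 - p - s) / 2 := rfl
  have hfv : lamPF p = (1 - p + s) / 2 := rfl
  have hr_neg : lamR p < 0 := by rw [hrv]; linarith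
  have hf_pos : 0 < lamPF p := by rw [hfv]; linarith
  have hf_lt1 : lamPF p < 1 := by rw [hfv]; linarith
  have h1r : 0 < 1 - lamR p := by linarith
  have h1f : 0 < 1 - lamPF p := by linarith
  set a := evRatio p with ha_def
  have ha : a = lamR p / lamPF p := rfl
  have ha_neg : a < 0 := div_neg_of_neg_of_pos hr_neg hf_pos
  have ha_gt : -1 < a := by
    rw [ha, lt_div_iff₀ hf_pos, hrv, hfv]; linarith
  have habs_lt : |a| < 1 := abs_lt.mpr ⟨ha_gt, lt_trans ha_neg one_pos⟩
  have haabs : 0 < |a| := abs_pos.mpr ha_neg.ne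
  set C := 1 / (1 - lamR p) with hC_def
  set D := 1 / (1 - lamPF p) with hD_def
  have hC : 0 < C := by positivity
  have hD : 0 < D := by positivity
  have hCD : C < D := by
    apply one_div_lt_one_div_of_lt h1f
    have : lamR p < lamPF p := by rw [hrv, hfv]; linarith
    linarith
  have ham : ∀ m : ℕ, a ^ m ≤ 1 := by
    intro m
    calc a ^ m ≤ |a ^ m| := le_abs_self _
    _ = |a| ^ m := abs_pow a m
    _ ≤ 1 := pow_le_one₀ (abs_nonneg a) habs_lt.le
  have hden : ∀ m : ℕ, 0 < D - C * a ^ m := by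
    intro m
    have h1 : C * a ^ m ≤ C * 1 := mul_le_mul_of_nonneg_left (ham m) hC.le
    nlinarith
  have hpow : ∀ k : ℕ, (-1 : ℝ) ^ (k + 1) * |a| ^ k = -a ^ k := by
    intro k
    rw [abs_of_neg ha_neg, ← neg_one_mul a, mul_pow, ← mul_assoc, ← pow_add]
    have hodd : Odd (k + 1 + k) := ⟨k, by ring⟩
    rw [hodd.neg_one_pow]; ring
  have hA : lamPF p / (1 - lamR p) = lamPF p * C := by rw [hC_def]; ring
  have hB : lamPF p / (1 - lamPF p) = lamPF p * D := by rw [hD_def]; ring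
  have key : ∀ m : ℕ, gFun p (m + 1)
      = (lamPF p * D - lamPF p * C * a ^ (m + 1)) / (D - C * a ^ m) := by
    intro m
    unfold gFun
    rw [Nat.add_sub_cancel, ← ha_def, hA, hB, ← hC_def, ← hD_def, hpow (m + 1), hpow m]
    ring
  set K := lamPF p * (1 - a) ^ 2 * C * D with hK_def
  have hK : 0 < K := by
    have h1a : 0 < 1 - a := by linarith
    positivity
  have hdiff : ∀ m : ℕ, gFun p (m + 1) - gFun p (m + 2)
      = K * a ^ m / ((D - C * a ^ m) * (D - C * a ^ (m + 1))) := by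
    intro m
    have k1 := key m
    have k2 : gFun p (m + 2)
        = (lamPF p * D - lamPF p * C * a ^ (m + 2)) / (D - C * a ^ (m + 1)) := key (m + 1)
    rw [k1, k2, div_sub_div _ _ (hden m).ne' (hden (m + 1)).ne']
    rw [hK_def]
    congr 1
    ring
  have hVar : ∀ m : ℕ, |gFun p (m + 1) - gFun p (m + 2)|
      = K * |a| ^ m / ((D - C * a ^ m) * (D - C * a ^ (m + 1))) := by
    intro m
    rw [hdiff m, abs_div, abs_of_pos (mul_pos (hden m) (hden (m + 1)))]
    congr 1
    rw [abs_mul, abs_of_pos hK, abs_pow]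
  have h0 : Tendsto (fun n : ℕ => a ^ n) atTop (nhds 0) :=
    tendsto_pow_atTop_nhds_zero_of_abs_lt_one habs_lt
  have t1 : Tendsto (fun n : ℕ => D - C * a ^ (n + 1)) atTop (nhds D) := by
    have h1 : Tendsto (fun n : ℕ => a ^ (n + 1)) atTop (nhds 0) := by
      simpa [Function.comp_def] using h0.comp (tendsto_add_atTop_nat 1)
    simpa using tendsto_const_nhds.sub (h1.const_mul C)
  have t3 : Tendsto (fun n : ℕ => D - C * a ^ (n + 3)) atTop (nhds D) := by
    have h1 : Tendsto (fun n : ℕ => a ^ (n + 3)) atTop (nhds 0) := by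
      simpa [Function.comp_def] using h0.comp (tendsto_add_atTop_nat 3)
    simpa using tendsto_const_nhds.sub (h1.const_mul C)
  have tmain : Tendsto (fun n : ℕ => |a| * ((D - C * a ^ (n + 1)) / (D - C * a ^ (n + 3))))
      atTop (nhds (|a| * (D / D))) := (t1.div t3 hD.ne').const_mul |a|
  rw [div_self hD.ne', mul_one] at tmain
  constructor
  · refine tmain.congr fun n => ?_
    have h1 : |gFun p (n + 3) - gFun p (n + 4)|
        = K * |a| ^ (n + 2) / ((D - C * a ^ (n + 2)) * (D - C * a ^ (n + 3))) := hVar (n + 2)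
    have h2 : |gFun p (n + 2) - gFun p (n + 3)|
        = K * |a| ^ (n + 1) / ((D - C * a ^ (n + 1)) * (D - C * a ^ (n + 2))) := hVar (n + 1)
    rw [h1, h2]
    field_simp [hK.ne', haabs.ne', (hden (n + 1)).ne', (hden (n + 2)).ne', (hden (n + 3)).ne']
    ring
  · have hgeo : Summable (fun n : ℕ => (K * |a| / (D - C) ^ 2) * |a| ^ n) :=
      (summable_geometric_of_lt_one (abs_nonneg a) habs_lt).mul_left _
    refine Summable.of_nonneg_of_le (fun n => abs_nonneg _) (fun n => ?_) hgeo
    have h2 : |gFun p (n + 2) - gFun p (n + 3)|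
        = K * |a| ^ (n + 1) / ((D - C * a ^ (n + 1)) * (D - C * a ^ (n + 2))) := hVar (n + 1)
    rw [h2]
    have hDC : 0 < D - C := by linarith
    have e1 : D - C ≤ D - C * a ^ (n + 1) := by
      have := mul_le_mul_of_nonneg_left (ham (n + 1)) hC.le
      linarith
    have e2 : D - C ≤ D - C * a ^ (n + 2) := by
      have := mul_le_mul_of_nonneg_left (ham (n + 2)) hC.le
      linarith
    have hb : (D - C) ^ 2 ≤ (D - C * a ^ (n + 1)) * (D - C * a ^ (n + 2)) := by
      calc (D - C) ^ 2 = (D - C) * (D - C) := sq (D - C)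
        _ ≤ (D - C * a ^ (n + 1)) * (D - C * a ^ (n + 2)) :=
            mul_le_mul e1 e2 hDC.le (by linarith)
    calc K * |a| ^ (n + 1) / ((D - C * a ^ (n + 1)) * (D - C * a ^ (n + 2)))
        ≤ K * |a| ^ (n + 1) / (D - C) ^ 2 := by
          gcongr
      _ = K * |a| / (D - C) ^ 2 * |a| ^ n := by ring
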